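/- In a rooted WDTAP instance, if F is a shadow-minimal feasible solution, then every link ℓ ∈ F covers both the first and the last arc of its tree path P_ℓ, and moreover ℓ is the unique link in F covering each of these two arcs. -/

import Mathlib

open scoped Classical

/-- A tree on vertex set `V`, rooted at `root`, encoded via the parent function.
Every non-root vertex `z` corresponds to the unique tree edge/arc `a_z` between
`z` and `parent z`. -/
structure ArcTree (V : Type*) where
  root : V
  parent : V → V
  parent_root : parent root = root
  reaches_root : ∀ v : V, ∃ n : ℕ, parent^[n] v = root

namespace ArcTree

variable {V : Type*}

/-- `x` is an ancestor of `y` (possibly `x = y`). -/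
def anc (T : ArcTree V) (x y : V) : Prop := ∃ n : ℕ, T.parent^[n] y = x

/-- The arc `a_z` (between `z` and `parent z`, for `z ≠ root`) lies on the
tree path between `u` and `v`. -/
def arcOnPath (T : ArcTree V) (u v z : V) : Prop :=
  z ≠ T.root ∧ ¬ (T.anc z u ↔ T.anc z v)

/-- The vertex `x` lies on the tree path between `u` and `v`. -/
def onPath (T : ArcTree V) (u v x : V) : Prop :=
  (T.anc x u ∨ T.anc x v) ∧ ∀ z, T.anc z u → T.anc z v → T.anc z x

/-- `x` is an inner vertex of the tree path between `u` and `v`. -/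
def innerOnPath (T : ArcTree V) (u v x : V) : Prop :=
  T.onPath u v x ∧ x ≠ u ∧ x ≠ v

/-- `w` is the least common ancestor of `u` and `v`. -/
def isLca (T : ArcTree V) (u v w : V) : Prop :=
  T.anc w u ∧ T.anc w v ∧ ∀ z, T.anc z u → T.anc z v → T.anc z w

end ArcTree

section Cover

variable {V : Type*}

/- Orientation convention: `up z = true` means the arc `a_z` is directed from `z` to
`parent z` (an up-arc, pointing towards the root); `up z = false` means it is directed
from `parent z` to `z` (a down-arc). -/

/-- The directed link `ℓ = (u, v)` covers the arc `a_z`, i.e. `a_z` is a backward arc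
of the tree path from `u` to `v` (equivalently, the walk from `v` back to `u`
traverses `a_z` in its forward direction). -/
def covers (T : ArcTree V) (up : V → Bool) (ℓ : V × V) (z : V) : Prop :=
  z ≠ T.root ∧
    ((T.anc z ℓ.2 ∧ ¬ T.anc z ℓ.1 ∧ up z = true) ∨
     (T.anc z ℓ.1 ∧ ¬ T.anc z ℓ.2 ∧ up z = false))

/-- The link `ℓ = (u,v)` covers the arc `a_z` in the wrong direction, i.e. `a_z` is a
forward arc of the tree path from `u` to `v`. -/
def wcovers (T : ArcTree V) (up : V → Bool) (ℓ : V × V) (z : V) : Prop :=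
  z ≠ T.root ∧
    ((T.anc z ℓ.1 ∧ ¬ T.anc z ℓ.2 ∧ up z = true) ∨
     (T.anc z ℓ.2 ∧ ¬ T.anc z ℓ.1 ∧ up z = false))

/-- `ℓ'` is a shadow of `ℓ`: the endpoints of `ℓ'` lie, in this order, on the tree path
of `ℓ`. -/
def IsShadow (T : ArcTree V) (ℓ ℓ' : V × V) : Prop :=
  T.onPath ℓ.1 ℓ.2 ℓ'.1 ∧ T.onPath ℓ'.1 ℓ.2 ℓ'.2

/-- `x` is an inner vertex of the path of the generic shadow of `ℓ` (the minimal shadow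
with the same directed coverage): `x` lies on `P_ℓ` and `ℓ` covers arcs on both sides
of `x`. -/
def innerGeneric (T : ArcTree V) (up : V → Bool) (ℓ : V × V) (x : V) : Prop :=
  T.onPath ℓ.1 ℓ.2 x ∧
    (∃ z, covers T up ℓ z ∧ T.arcOnPath ℓ.1 x z) ∧
    (∃ z, covers T up ℓ z ∧ T.arcOnPath x ℓ.2 z)

/-- The arc `a_z` (lying in the subtree of `v`) is visible to `v` with respect to the
link set `L'`. -/
def visibleArc (T : ArcTree V) (up : V → Bool) (L' : Set (V × V)) (v z : V) : Prop :=
  T.anc v z ∧ z ≠ v ∧ ∃ ℓ ∈ L', covers T up ℓ z ∧ innerGeneric T up ℓ v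

/-- A set of arcs (encoded by their lower endpoints) is ancestor-free: no arc of the
set lies on the path from another arc's apex (top endpoint) to the root. -/
def AncestorFree (T : ArcTree V) (S : Set V) : Prop :=
  ∀ z ∈ S, ∀ z' ∈ S, z ≠ z' → ¬ T.anc z' (T.parent z)

/-- The visible up-width of `v` w.r.t. the link set `L'` is at most `k`. -/
def upWidthLE (T : ArcTree V) (up : V → Bool) (L' : Set (V × V)) (v : V) (k : ℕ) : Prop :=
  ∀ S : Finset V, AncestorFree T (S : Set V) →
    (∀ z ∈ S, up z = true ∧ visibleArc T up L' v z) → S.card ≤ k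

/-- The visible down-width of `v` w.r.t. the link set `L'` is at most `k`. -/
def downWidthLE (T : ArcTree V) (up : V → Bool) (L' : Set (V × V)) (v : V) (k : ℕ) : Prop :=
  ∀ S : Finset V, AncestorFree T (S : Set V) →
    (∀ z ∈ S, up z = false ∧ visibleArc T up L' v z) → S.card ≤ k

/-- The link `ℓ` points into the subtree `T_v`. -/
def pointsInto (T : ArcTree V) (v : V) (ℓ : V × V) : Prop :=
  T.anc v ℓ.2 ∧ ℓ.2 ≠ v ∧ ¬ T.anc v ℓ.1

/-- The link `ℓ` points out of the subtree `T_v`. -/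
def pointsOut (T : ArcTree V) (v : V) (ℓ : V × V) : Prop :=
  T.anc v ℓ.1 ∧ ℓ.1 ≠ v ∧ ¬ T.anc v ℓ.2

/-- `v` is up-independent w.r.t. the link set `L'`: every link either covers no up-arc
of the subtree `T_v`, or its whole coverage lies inside `T_v`. -/
def upIndep (T : ArcTree V) (up : V → Bool) (L' : Set (V × V)) (v : V) : Prop :=
  ∀ ℓ ∈ L', (¬ ∃ z, covers T up ℓ z ∧ T.anc v z ∧ z ≠ v ∧ up z = true) ∨
    (∀ z, covers T up ℓ z → T.anc v z ∧ z ≠ v)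

/-- `v` is down-independent w.r.t. the link set `L'`. -/
def downIndep (T : ArcTree V) (up : V → Bool) (L' : Set (V × V)) (v : V) : Prop :=
  ∀ ℓ ∈ L', (¬ ∃ z, covers T up ℓ z ∧ T.anc v z ∧ z ≠ v ∧ up z = false) ∨
    (∀ z, covers T up ℓ z → T.anc v z ∧ z ≠ v)

/-- A feasible (integral) solution: every arc is covered by some link of `F`. -/
def Feasible (T : ArcTree V) (up : V → Bool) (F : Finset (V × V)) : Prop :=
  ∀ z, z ≠ T.root → ∃ ℓ ∈ F, covers T up ℓ z

/-- `F` is shadow-minimal: no link of `F` can be replaced by a proper shadow while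
maintaining feasibility. -/
def ShadowMinimal (T : ArcTree V) (up : V → Bool) (F : Finset (V × V)) : Prop :=
  ∀ ℓ ∈ F, ∀ ℓ' : V × V, IsShadow T ℓ ℓ' → ℓ' ≠ ℓ →
    ¬ Feasible T up (insert ℓ' (F.erase ℓ))

/-- A splitting of the link set: each link is mapped to a set of shadows whose tree
paths partition the arc set of its tree path. -/
def IsSplitting (T : ArcTree V) (σ : V × V → Finset (V × V)) : Prop :=
  ∀ ℓ : V × V,
    (σ ℓ).Nonempty ∧
    (∀ ℓ' ∈ σ ℓ, IsShadow T ℓ ℓ' ∧ (ℓ'.1 ≠ ℓ'.2 ∨ ℓ' = ℓ)) ∧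
    (∀ z, T.arcOnPath ℓ.1 ℓ.2 z ↔ ∃ ℓ' ∈ σ ℓ, T.arcOnPath ℓ'.1 ℓ'.2 z) ∧
    (∀ ℓ₁ ∈ σ ℓ, ∀ ℓ₂ ∈ σ ℓ, ℓ₁ ≠ ℓ₂ →
      ∀ z, T.arcOnPath ℓ₁.1 ℓ₁.2 z → ¬ T.arcOnPath ℓ₂.1 ℓ₂.2 z)

/-- The LP solution obtained from `x` by applying the splitting `σ`. -/
noncomputable def splitSol [Fintype V] (σ : V × V → Finset (V × V)) (x : V × V → ℝ) :
    V × V → ℝ :=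
  fun ℓ' => ∑ ℓ : V × V, if ℓ' ∈ σ ℓ then x ℓ else 0

/-- `x` is a feasible solution of the WDTAP set-covering LP. -/
def FeasLP [Fintype V] (T : ArcTree V) (up : V → Bool) (x : V × V → ℝ) : Prop :=
  (∀ ℓ, 0 ≤ x ℓ) ∧
    ∀ z, z ≠ T.root → 1 ≤ ∑ ℓ : V × V, if covers T up ℓ z then x ℓ else 0

end Cover

/-!
Dropping an end arc `a_z` from the path of a link `ℓ` gives a proper shadow `ℓ'` whose
endpoints are separated from those of `ℓ` only by `a_z`, so `ℓ'` still covers every arc that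
`ℓ` covers, except possibly `a_z`. If another link of `F` covered `a_z`, replacing `ℓ` by `ℓ'`
would keep `F` feasible, against shadow-minimality; feasibility then forces `ℓ` itself to
cover `a_z`.
-/

namespace ArcTree

variable {V : Type*} (T : ArcTree V)

lemma anc_refl (x : V) : T.anc x x := ⟨0, rfl⟩

lemma anc_trans {a b c : V} (hab : T.anc a b) (hbc : T.anc b c) : T.anc a c := by
  obtain ⟨m, hm⟩ := hab
  obtain ⟨n, hn⟩ := hbc
  exact ⟨m + n, by rw [Function.iterate_add_apply, hn, hm]⟩

lemma anc_total {a b y : V} (ha : T.anc a y) (hb : T.anc b y) : T.anc a b ∨ T.anc b a := by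
  obtain ⟨m, rfl⟩ := ha
  obtain ⟨n, rfl⟩ := hb
  rcases le_total m n with h | h
  · exact Or.inr ⟨n - m, by rw [← Function.iterate_add_apply, Nat.sub_add_cancel h]⟩
  · exact Or.inl ⟨m - n, by rw [← Function.iterate_add_apply, Nat.sub_add_cancel h]⟩

lemma anc_parent_iff {x z : V} (hxz : x ≠ z) : T.anc x (T.parent z) ↔ T.anc x z := by
  refine ⟨fun h => T.anc_trans h ⟨1, rfl⟩, fun ⟨n, hn⟩ => ?_⟩
  cases n with
  | zero => exact absurd hn.symm hxz
  | succ n => exact ⟨n, by rwa [← Function.iterate_succ_apply]⟩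

lemma parent_ne_self {z : V} (hz : z ≠ T.root) : T.parent z ≠ z := by
  intro h
  obtain ⟨n, hn⟩ := T.reaches_root z
  exact hz (by rwa [Function.iterate_fixed h] at hn)

lemma exists_other_end {z a : V} (hz : z ≠ T.root) (ha : z = a ∨ T.parent z = a) :
    ∃ w, (w = z ∨ w = T.parent z) ∧ w ≠ a ∧ ∀ x, x ≠ z → (T.anc x w ↔ T.anc x a) := by
  rcases ha with rfl | rfl
  · exact ⟨T.parent z, Or.inr rfl, T.parent_ne_self hz, fun x hx => T.anc_parent_iff hx⟩
  · exact ⟨z, Or.inl rfl, (T.parent_ne_self hz).symm, fun x hx => (T.anc_parent_iff hx).symm⟩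

lemma onPath_left (u v : V) : T.onPath u v u :=
  ⟨Or.inl (T.anc_refl u), fun _ h _ => h⟩

lemma onPath_right (u v : V) : T.onPath u v v :=
  ⟨Or.inr (T.anc_refl v), fun _ _ h => h⟩

lemma onPath_of_arcOnPath {u v z w : V} (hz : T.arcOnPath u v z)
    (hw : w = z ∨ w = T.parent z) : T.onPath u v w := by
  obtain ⟨-, hsep⟩ := hz
  have hzuv : T.anc z u ∨ T.anc z v := by tauto
  have hbelow : ∀ c, T.anc c u → T.anc c v → T.anc c z ∧ c ≠ z := by
    intro c hcu hcv
    refine ⟨?_, by rintro rfl; tauto⟩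
    rcases hzuv with h | h
    · exact (T.anc_total hcu h).resolve_right fun hzc =>
        hsep ⟨fun _ => T.anc_trans hzc hcv, fun _ => h⟩
    · exact (T.anc_total hcv h).resolve_right fun hzc =>
        hsep ⟨fun _ => h, fun _ => T.anc_trans hzc hcu⟩
  rcases hw with rfl | rfl
  · exact ⟨hzuv, fun c hcu hcv => (hbelow c hcu hcv).1⟩
  · refine ⟨hzuv.imp (T.anc_trans ⟨1, rfl⟩) (T.anc_trans ⟨1, rfl⟩), fun c hcu hcv => ?_⟩
    obtain ⟨hcz, hne⟩ := hbelow c hcu hcv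
    exact (T.anc_parent_iff hne).mpr hcz

end ArcTree

section Cover

variable {V : Type*} {T : ArcTree V} {up : V → Bool}

lemma covers_congr {ℓ ℓ' : V × V} {z : V} (h₁ : T.anc z ℓ'.1 ↔ T.anc z ℓ.1)
    (h₂ : T.anc z ℓ'.2 ↔ T.anc z ℓ.2) : covers T up ℓ' z ↔ covers T up ℓ z := by
  unfold covers
  rw [h₁, h₂]

lemma exists_shadow_of_end_arc_fst {ℓ : V × V} {z : V} (hz : T.arcOnPath ℓ.1 ℓ.2 z)
    (hend : z = ℓ.1 ∨ T.parent z = ℓ.1) :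
    ∃ ℓ', IsShadow T ℓ ℓ' ∧ ℓ' ≠ ℓ ∧ ∀ x, x ≠ z → covers T up ℓ x → covers T up ℓ' x := by
  obtain ⟨w, hw, hwne, hanc⟩ := T.exists_other_end hz.1 hend
  exact ⟨(w, ℓ.2), ⟨T.onPath_of_arcOnPath hz hw, T.onPath_right w ℓ.2⟩,
    fun h => hwne (congrArg Prod.fst h),
    fun x hx => (covers_congr (ℓ := ℓ) (ℓ' := (w, ℓ.2)) (hanc x hx) Iff.rfl).mpr⟩

lemma exists_shadow_of_end_arc_snd {ℓ : V × V} {z : V} (hz : T.arcOnPath ℓ.1 ℓ.2 z)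
    (hend : z = ℓ.2 ∨ T.parent z = ℓ.2) :
    ∃ ℓ', IsShadow T ℓ ℓ' ∧ ℓ' ≠ ℓ ∧ ∀ x, x ≠ z → covers T up ℓ x → covers T up ℓ' x := by
  obtain ⟨w, hw, hwne, hanc⟩ := T.exists_other_end hz.1 hend
  exact ⟨(ℓ.1, w), ⟨T.onPath_left ℓ.1 ℓ.2, T.onPath_of_arcOnPath hz hw⟩,
    fun h => hwne (congrArg Prod.snd h),
    fun x hx => (covers_congr (ℓ := ℓ) (ℓ' := (ℓ.1, w)) Iff.rfl (hanc x hx)).mpr⟩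

lemma ShadowMinimal.eq_of_covers_of_shadow {F : Finset (V × V)} (hfeas : Feasible T up F)
    (hmin : ShadowMinimal T up F) {ℓ ℓ' ℓ₀ : V × V} {z : V} (hℓ : ℓ ∈ F)
    (hsh : IsShadow T ℓ ℓ') (hne : ℓ' ≠ ℓ)
    (htake : ∀ x, x ≠ z → covers T up ℓ x → covers T up ℓ' x)
    (hℓ₀ : ℓ₀ ∈ F) (hcov₀ : covers T up ℓ₀ z) : ℓ₀ = ℓ := by
  by_contra hℓ₀ne
  refine hmin ℓ hℓ ℓ' hsh hne fun x hx => ?_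
  obtain ⟨ℓ₁, hℓ₁, hc⟩ := hfeas x hx
  by_cases h : ℓ₁ = ℓ
  · by_cases hxz : x = z
    · exact ⟨ℓ₀, Finset.mem_insert_of_mem (Finset.mem_erase.mpr ⟨hℓ₀ne, hℓ₀⟩), hxz ▸ hcov₀⟩
    · exact ⟨ℓ', Finset.mem_insert_self _ _, htake x hxz (h ▸ hc)⟩
  · exact ⟨ℓ₁, Finset.mem_insert_of_mem (Finset.mem_erase.mpr ⟨h, hℓ₁⟩), hc⟩

end Cover

/-- In a shadow-minimal feasible solution `F`, every link `ℓ ∈ F`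
covers the first and the last arc of its tree path (the arcs of `P_ℓ` incident to its
endpoints), and it is the unique link of `F` covering each of these two arcs. -/
theorem shadow_minimal_covers_end_arcs {V : Type*}
    (T : ArcTree V) (up : V → Bool) (F : Finset (V × V))
    (hfeas : Feasible T up F) (hmin : ShadowMinimal T up F) :
    ∀ ℓ ∈ F, ∀ z : V,
      (T.arcOnPath ℓ.1 ℓ.2 z ∧ (z = ℓ.1 ∨ T.parent z = ℓ.1)) ∨
      (T.arcOnPath ℓ.1 ℓ.2 z ∧ (z = ℓ.2 ∨ T.parent z = ℓ.2)) →
      covers T up ℓ z ∧ ∀ ℓ' ∈ F, covers T up ℓ' z → ℓ' = ℓ := by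
  intro ℓ hℓ z hz
  obtain ⟨ℓ', hsh, hne, htake⟩ : ∃ ℓ', IsShadow T ℓ ℓ' ∧ ℓ' ≠ ℓ ∧
      ∀ x, x ≠ z → covers T up ℓ x → covers T up ℓ' x := by
    rcases hz with ⟨hz, hend⟩ | ⟨hz, hend⟩
    · exact exists_shadow_of_end_arc_fst hz hend
    · exact exists_shadow_of_end_arc_snd hz hend
  have hunique : ∀ ℓ₀ ∈ F, covers T up ℓ₀ z → ℓ₀ = ℓ := fun ℓ₀ hℓ₀ hcov =>
    hmin.eq_of_covers_of_shadow hfeas hℓ hsh hne htake hℓ₀ hcov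
  have hzr : z ≠ T.root := by rcases hz with ⟨hz, -⟩ | ⟨hz, -⟩ <;> exact hz.1
  obtain ⟨ℓ₀, hℓ₀, hcov⟩ := hfeas z hzr
  exact ⟨hunique ℓ₀ hℓ₀ hcov ▸ hcov, hunique⟩
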